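/- arXiv:1412.3531 — 6 statements merged into one kernel-verified Lean document; each statement's English description precedes it below -/
import Mathlib

section
/- Let N be a positive integer, let a_1, a_2, …, a_N be real numbers, let q be a positive integer, and let t_0 be a positive integer. Then there exists an integer t with t_0 ≤ t ≤ t_0·q^N and integers x_1, x_2, …, x_N such that |t·a_n − x_n| ≤ 1/q for all 1 ≤ n ≤ N. -/
/-!
Pigeonhole: of the `q ^ N + 1` points `(fract (j * t0 * a i))ᵢ`, `0 ≤ j ≤ q ^ N`, two lie in the
same box of side `1 / q` of the unit cube `[0, 1) ^ N`. If they belong to `j₁ < j₂`, then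
`m = j₂ - j₁` satisfies `1 ≤ m ≤ q ^ N` and `m * t0 * a i` is within `1 / q` of an integer, so
`t = t0 * m` works.
-/

open Finset

theorem floor_mul_fract_mem_Ico {q : ℕ} (hq : 0 < q) (x : ℝ) :
    ⌊q * Int.fract x⌋ ∈ Ico (0 : ℤ) q := by
  have := Int.fract_nonneg x
  have := Int.fract_lt_one x
  rw [mem_Ico, Int.floor_nonneg, Int.floor_lt]
  push_cast
  constructor <;> nlinarith [(Nat.cast_pos.2 hq : (0 : ℝ) < q)]

theorem abs_fract_sub_fract_lt_of_floor_eq {q x y : ℝ} (hq : 0 < q)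
    (h : ⌊q * Int.fract x⌋ = ⌊q * Int.fract y⌋) : |Int.fract x - Int.fract y| < 1 / q := by
  have := Int.abs_sub_lt_one_of_floor_eq_floor h
  rw [← mul_sub, abs_mul, abs_of_pos hq] at this
  rwa [lt_div_iff₀ hq, mul_comm]

theorem exists_lt_abs_fract_sub_fract_lt {ι : Type*} [Fintype ι] (a : ι → ℝ) {q : ℕ}
    (hq : 0 < q) :
    ∃ j₁ j₂ : ℕ, j₁ < j₂ ∧ j₂ ≤ q ^ Fintype.card ι ∧
      ∀ i, |Int.fract (j₂ * a i) - Int.fract (j₁ * a i)| < 1 / q := by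
  classical
  have hqR : (0 : ℝ) < q := Nat.cast_pos.2 hq
  let box : ℕ → ι → ℤ := fun j i => ⌊q * Int.fract (j * a i)⌋
  have hbox : ∀ j ∈ range (q ^ Fintype.card ι + 1),
      box j ∈ Fintype.piFinset fun _ : ι => Ico (0 : ℤ) q :=
    fun j _ => Fintype.mem_piFinset.2 fun i => floor_mul_fract_mem_Ico hq _
  have hcard : #(Fintype.piFinset fun _ : ι => Ico (0 : ℤ) q) <
      #(range (q ^ Fintype.card ι + 1)) := by
    simp
  obtain ⟨j, hj, k, hk, hne, hjk⟩ := exists_ne_map_eq_of_card_lt_of_maps_to hcard hbox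
  have close : ∀ i, |Int.fract (j * a i) - Int.fract (k * a i)| < 1 / q := fun i =>
    abs_fract_sub_fract_lt_of_floor_eq hqR (congrFun hjk i)
  rw [mem_range, Nat.lt_succ_iff] at hj hk
  rcases hne.lt_or_gt with hlt | hlt
  · exact ⟨j, k, hlt, hk, fun i => abs_sub_comm (Int.fract (j * a i)) _ ▸ close i⟩
  · exact ⟨k, j, hlt, hj, close⟩

/-- **Dirichlet's simultaneous approximation theorem**. -/
theorem exists_nat_abs_mul_sub_lt {ι : Type*} [Fintype ι] (a : ι → ℝ) {q : ℕ} (hq : 0 < q) :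
    ∃ m : ℕ, 0 < m ∧ m ≤ q ^ Fintype.card ι ∧
      ∃ x : ι → ℤ, ∀ i, |m * a i - x i| < 1 / q := by
  obtain ⟨j₁, j₂, hlt, hle, close⟩ := exists_lt_abs_fract_sub_fract_lt a hq
  refine ⟨j₂ - j₁, by omega, by omega, fun i => ⌊j₂ * a i⌋ - ⌊j₁ * a i⌋, fun i => ?_⟩
  convert close i using 2
  simp only [Int.fract, Nat.cast_sub hlt.le]
  push_cast
  ring

theorem dirichlet_with_lower_bound_general (N : ℕ) (a : Fin N → ℝ)
    (q t0 : ℕ) (hq : 1 ≤ q) :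
    ∃ t : ℤ, (t0 : ℤ) ≤ t ∧ t ≤ (t0 : ℤ) * (q : ℤ) ^ N ∧
      ∃ x : Fin N → ℤ, ∀ i : Fin N, |(t : ℝ) * a i - (x i : ℝ)| ≤ 1 / (q : ℝ) := by
  obtain ⟨m, hm, hmq, x, hx⟩ := exists_nat_abs_mul_sub_lt (fun i => t0 * a i) hq
  rw [Fintype.card_fin] at hmq
  refine ⟨t0 * m, ?_, ?_, x, fun i => ?_⟩
  · exact le_mul_of_one_le_right (by positivity) (by exact_mod_cast hm)
  · exact mul_le_mul_of_nonneg_left (by exact_mod_cast hmq) (by positivity)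
  · have hscale : ((t0 * m : ℤ) : ℝ) * a i = m * (t0 * a i) := by push_cast; ring
    exact hscale ▸ (hx i).le

/-- **Dirichlet's theorem on simultaneous Diophantine approximation**, with a
prescribed lower bound `t0` on the integer scale factor: given real numbers
`a 1, …, a N`, a positive integer `q` and a positive integer `t0`, there is an
integer `t` with `t0 ≤ t ≤ t0 * q ^ N` and integers `x 1, …, x N` such that
`|t * a n - x n| ≤ 1 / q` for all `n`. -/
theorem dirichlet_with_lower_bound (N : ℕ) (hN : 1 ≤ N) (a : Fin N → ℝ)
    (q t0 : ℕ) (hq : 1 ≤ q) (ht0 : 1 ≤ t0) :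
    ∃ t : ℤ, (t0 : ℤ) ≤ t ∧ t ≤ (t0 : ℤ) * (q : ℤ) ^ N ∧
      ∃ x : Fin N → ℤ, ∀ i : Fin N, |(t : ℝ) * a i - (x i : ℝ)| ≤ 1 / (q : ℝ) :=
  dirichlet_with_lower_bound_general N a q t0 hq
end

section
/- For each integer N ≥ 3, let A(N) be the number of equivalence classes of pairs (n,k) with 3 ≤ n ≤ N and 1 ≤ k ≤ n/2, where (n,k) and (n',k') are equivalent when the generalised Petersen graphs P(n,k) and P(n',k') are isomorphic as simple graphs; and let B(N) be the number of such equivalence classes that contain some pair (n,k) with k² ≡ 1 (mod n) (equivalently, by the theorem of Nedela and Škoviera, the classes whose graphs are Cayley graphs). Then B(N)/A(N) → 0 as N → ∞; that is, almost all generalised Petersen graphs are not Cayley graphs. -/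
open scoped Classical

/-- The generalised Petersen graph `P(n,k)` on vertex set `ZMod n × Bool`:
`(i, false)` is the outer vertex `a i`, `(i, true)` is the inner vertex `b i`;
edges are `a i a (i+1)`, `a i b i` and `b i b (i+k)` (indices mod `n`). -/
def petersen (n k : ℕ) : SimpleGraph (ZMod n × Bool) :=
  SimpleGraph.fromRel fun v w =>
    (v.2 = false ∧ w.2 = false ∧ w.1 = v.1 + 1) ∨
    (v.2 = false ∧ w.2 = true ∧ w.1 = v.1) ∨
    (v.2 = true ∧ w.2 = true ∧ w.1 = v.1 + (k : ZMod n))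

/-- Pairs `(n, k)` with `3 ≤ n ≤ N` and `1 ≤ k ≤ n / 2`. -/
def gpPairs (N : ℕ) : Finset (ℕ × ℕ) :=
  (Finset.range (N + 1) ×ˢ Finset.range (N + 1)).filter
    fun p => 3 ≤ p.1 ∧ 1 ≤ p.2 ∧ 2 * p.2 ≤ p.1

/-- Two pairs `(n, k)` and `(n', k')` are equivalent when the generalised
Petersen graphs `P(n,k)` and `P(n',k')` are isomorphic as simple graphs. -/
def petersenSetoid : Setoid (ℕ × ℕ) where
  r p q := Nonempty (petersen p.1 p.2 ≃g petersen q.1 q.2)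
  iseqv := ⟨fun _ => ⟨SimpleGraph.Iso.refl⟩,
    fun ⟨e⟩ => ⟨e.symm⟩, fun ⟨e⟩ ⟨f⟩ => ⟨e.trans f⟩⟩

/-- `A N`: the number of isomorphism classes of generalised Petersen graphs
`P(n,k)` with `3 ≤ n ≤ N` and `1 ≤ k ≤ n / 2`. -/
noncomputable def numGP (N : ℕ) : ℕ :=
  ((gpPairs N).image (Quotient.mk petersenSetoid)).card

/-- `B N`: the number of such isomorphism classes containing some pair `(n,k)`
with `k² ≡ 1 (mod n)`, i.e. (by Nedela–Škoviera) the classes of Cayley graphs. -/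
noncomputable def numCayleyGP (N : ℕ) : ℕ :=
  (((gpPairs N).filter fun p => p.2 ^ 2 ≡ 1 [MOD p.1]).image
    (Quotient.mk petersenSetoid)).card

/-!
Isomorphism classes are bounded below by `(N / 2) · N^{1/4}`: for `N / 2 < n ≤ N` and
`k ≤ N^{1/4}` the graphs `P(n,k)` are pairwise non-isomorphic, since the order `2n` recovers `n`
and the diameter, which lies between `n / (2k)` (every edge moves the index by at most `k`) and
`n / (2k) + k + 3`, is strictly decreasing in `k` once `8k³ ≤ n`.

Cayley classes are bounded above by `N (1 + log N)`: if `k² ≡ 1 (mod n)` and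
`a = gcd (k - 1) n`, then `k ≡ 1 (mod a)`, `k ≡ -1 (mod n / a)` and `gcd a (n / a) ∣ 2`,
so `a` determines `k` modulo `n / 2`, hence on `[1, n / 2]`. So the pairs `(n, k)` inject into the
pairs `a ∣ n ≤ N`, of which there are `∑_{a ≤ N} ⌊N / a⌋`.
-/

open SimpleGraph Finset

namespace SimpleGraph

variable {V W : Type*} {G : SimpleGraph V} {H : SimpleGraph W}

lemma Hom.edist_le (f : G →g H) (u v : V) : H.edist (f u) (f v) ≤ G.edist u v :=
  le_sInf <| by
    rintro _ ⟨w, rfl⟩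
    simpa using SimpleGraph.edist_le (w.map f)

lemma Iso.edist_eq (φ : G ≃g H) (u v : V) : H.edist (φ u) (φ v) = G.edist u v :=
  le_antisymm (φ.toHom.edist_le u v) <| by
    simpa using φ.symm.toHom.edist_le (φ u) (φ v)

lemma Iso.ediam_eq (φ : G ≃g H) : H.ediam = G.ediam := by
  simp only [ediam_def, ← (φ.toEquiv.prodCongr φ.toEquiv).iSup_comp]
  exact iSup_congr fun p => φ.edist_eq p.1 p.2

lemma edist_fromRel_le_one {r : V → V → Prop} {u v : V} (h : r u v) :
    (fromRel r).edist u v ≤ 1 := by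
  rw [edist_le_one_iff_adj_or_eq, fromRel_adj]
  by_cases huv : u = v
  · exact .inr huv
  · exact .inl ⟨huv, .inl h⟩

lemma edist_le_of_edist_succ_le_one (f : ℕ → V) (h : ∀ j, G.edist (f j) (f (j + 1)) ≤ 1) :
    ∀ m : ℕ, G.edist (f 0) (f m) ≤ m
  | 0 => by simp
  | m + 1 => calc
      G.edist (f 0) (f (m + 1)) ≤ G.edist (f 0) (f m) + G.edist (f m) (f (m + 1)) :=
        G.edist_triangle
      _ ≤ m + 1 := add_le_add (edist_le_of_edist_succ_le_one f h m) (h m)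
      _ = ↑(m + 1) := by push_cast; rfl

end SimpleGraph

lemma ZMod.exists_le_half_eq_natCast_or_eq_neg {n : ℕ} [NeZero n] (x : ZMod n) :
    ∃ m ≤ n / 2, x = m ∨ x = -m := by
  refine ⟨x.valMinAbs.natAbs, x.natAbs_valMinAbs_le, ?_⟩
  rcases x.valMinAbs.natAbs_eq with h | h
  · left
    conv_lhs => rw [← x.coe_valMinAbs, h]
    simp
  · right
    conv_lhs => rw [← x.coe_valMinAbs, h]
    simp

lemma ZMod.natAbs_valMinAbs_natCast_le {n : ℕ} [NeZero n] (m : ℕ) :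
    (m : ZMod n).valMinAbs.natAbs ≤ m := by
  rw [ZMod.valMinAbs_natAbs_eq_min, ZMod.val_natCast]
  exact (min_le_left _ _).trans (Nat.mod_le _ _)

section diameter

variable {n k : ℕ}

lemma edist_petersen_outer_le_one (i : ZMod n) :
    (petersen n k).edist (i, false) (i + 1, false) ≤ 1 :=
  edist_fromRel_le_one (.inl ⟨rfl, rfl, rfl⟩)

lemma edist_petersen_spoke_le_one (i : ZMod n) :
    (petersen n k).edist (i, false) (i, true) ≤ 1 :=
  edist_fromRel_le_one (.inr (.inl ⟨rfl, rfl, rfl⟩))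

lemma edist_petersen_inner_le_one (i : ZMod n) :
    (petersen n k).edist (i, true) (i + k, true) ≤ 1 :=
  edist_fromRel_le_one (.inr (.inr ⟨rfl, rfl, rfl⟩))

lemma edist_petersen_outer_add_le (i : ZMod n) (m : ℕ) :
    (petersen n k).edist (i, false) (i + (m : ZMod n), false) ≤ m := by
  simpa using edist_le_of_edist_succ_le_one (fun j : ℕ => (i + (j : ZMod n), false))
    (fun j => by simpa [add_assoc] using edist_petersen_outer_le_one (i + (j : ZMod n))) m

lemma edist_petersen_inner_add_le (i : ZMod n) (q : ℕ) :
    (petersen n k).edist (i, true) (i + (q : ZMod n) * k, true) ≤ q := by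
  simpa using edist_le_of_edist_succ_le_one (fun j : ℕ => (i + (j : ZMod n) * (k : ZMod n), true))
    (fun j => by
      simpa [add_mul, add_assoc] using
        edist_petersen_inner_le_one (i + (j : ZMod n) * (k : ZMod n))) q

lemma edist_petersen_outer_add_le_div_add_mod (i : ZMod n) (m : ℕ) :
    (petersen n k).edist (i, false) (i + (m : ZMod n), false) ≤ ↑(m / k + m % k + 2) := by
  set j : ZMod n := i + ((m / k : ℕ) : ZMod n) * k
  have hj : j + ((m % k : ℕ) : ZMod n) = i + m := by
    conv_rhs => rw [← Nat.div_add_mod' m k]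
    push_cast [j]
    ring
  calc (petersen n k).edist (i, false) (i + (m : ZMod n), false)
      ≤ (petersen n k).edist (i, false) (i, true) + (petersen n k).edist (i, true) (j, true)
        + (petersen n k).edist (j, true) (j, false)
        + (petersen n k).edist (j, false) (j + ((m % k : ℕ) : ZMod n), false) := by
        rw [hj]
        exact SimpleGraph.edist_triangle.trans (add_le_add_left (SimpleGraph.edist_triangle.trans
          (add_le_add_left SimpleGraph.edist_triangle _)) _)
    _ ≤ 1 + ↑(m / k) + 1 + ↑(m % k) := by
        gcongr
        · exact edist_petersen_spoke_le_one i
        · exact edist_petersen_inner_add_le i _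
        · rw [SimpleGraph.edist_comm]
          exact edist_petersen_spoke_le_one j
        · exact edist_petersen_outer_add_le j _
    _ = ↑(m / k + m % k + 2) := by
        push_cast
        ring

lemma edist_petersen_outer_le [NeZero n] (hk : 0 < k) (i j : ZMod n) :
    (petersen n k).edist (i, false) (j, false) ≤ ↑(n / 2 / k + k + 1) := by
  obtain ⟨m, hm, h⟩ := (j - i).exists_le_half_eq_natCast_or_eq_neg
  have hbound : (↑(m / k + m % k + 2) : ℕ∞) ≤ ↑(n / 2 / k + k + 1) := by
    have := Nat.div_le_div_right (c := k) hm
    have := Nat.mod_lt m hk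
    exact_mod_cast (by omega)
  rcases h with h | h
  · rw [show j = i + m by rw [← h]; ring]
    exact (edist_petersen_outer_add_le_div_add_mod i m).trans hbound
  · rw [SimpleGraph.edist_comm, show i = j + m by rw [← neg_eq_iff_eq_neg.mpr h]; ring]
    exact (edist_petersen_outer_add_le_div_add_mod j m).trans hbound

lemma ediam_petersen_le [NeZero n] (hk : 0 < k) :
    (petersen n k).ediam ≤ ↑(n / 2 / k + k + 3) := by
  have spoke : ∀ u : ZMod n × Bool, (petersen n k).edist u (u.1, false) ≤ 1 := by
    rintro ⟨i, _ | _⟩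
    · simp
    · rw [SimpleGraph.edist_comm]
      exact edist_petersen_spoke_le_one i
  refine ediam_le_of_edist_le fun u v => ?_
  calc (petersen n k).edist u v
      ≤ (petersen n k).edist u (u.1, false) + (petersen n k).edist (u.1, false) (v.1, false)
        + (petersen n k).edist (v.1, false) v :=
        SimpleGraph.edist_triangle.trans (add_le_add_left SimpleGraph.edist_triangle _)
    _ ≤ 1 + ↑(n / 2 / k + k + 1) + 1 := by
        gcongr
        · exact spoke u
        · exact edist_petersen_outer_le hk _ _
        · rw [SimpleGraph.edist_comm]
          exact spoke v
    _ = ↑(n / 2 / k + k + 3) := by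
        push_cast
        ring

end diameter

section diameter_lower

variable {n k : ℕ} [NeZero n]

lemma natAbs_valMinAbs_sub_le_of_petersen_adj (hk : 1 ≤ k) {u v : ZMod n × Bool}
    (h : (petersen n k).Adj u v) : (v.1 - u.1).valMinAbs.natAbs ≤ k := by
  have h1 : (1 : ZMod n).valMinAbs.natAbs ≤ k := by
    simpa using (ZMod.natAbs_valMinAbs_natCast_le (n := n) 1).trans hk
  have hk' := ZMod.natAbs_valMinAbs_natCast_le (n := n) k
  obtain ⟨-, (⟨-, -, e⟩ | ⟨-, -, e⟩ | ⟨-, -, e⟩) | (⟨-, -, e⟩ | ⟨-, -, e⟩ | ⟨-, -, e⟩)⟩ := h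
  all_goals simp [e, h1, hk']

lemma natAbs_valMinAbs_sub_le_mul_length (hk : 1 ≤ k) {u v : ZMod n × Bool}
    (w : (petersen n k).Walk u v) : (v.1 - u.1).valMinAbs.natAbs ≤ k * w.length := by
  induction w with
  | nil => simp
  | @cons u x v h p ih =>
    calc (v.1 - u.1).valMinAbs.natAbs = ((v.1 - x.1) + (x.1 - u.1)).valMinAbs.natAbs := by
          rw [sub_add_sub_cancel]
      _ ≤ (v.1 - x.1).valMinAbs.natAbs + (x.1 - u.1).valMinAbs.natAbs :=
          (ZMod.natAbs_valMinAbs_add_le _ _).trans (Int.natAbs_add_le _ _)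
      _ ≤ k * p.length + k := add_le_add ih (natAbs_valMinAbs_sub_le_of_petersen_adj hk h)
      _ = k * (p.cons h).length := by simp [mul_add]

lemma half_le_mul_of_ediam_petersen_le (hk : 1 ≤ k) {D : ℕ} (h : (petersen n k).ediam ≤ D) :
    n / 2 ≤ k * D := by
  have hD : (petersen n k).edist (0, false) ((n / 2 : ℕ), false) ≤ D :=
    edist_le_ediam.trans h
  obtain ⟨w, hw⟩ := exists_walk_of_edist_ne_top (hD.trans_lt (ENat.natCast_lt_top D)).ne
  have hwD : w.length ≤ D := by exact_mod_cast hw ▸ hD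
  calc n / 2 = (((n / 2 : ℕ) : ZMod n) - 0).valMinAbs.natAbs := by
        rw [sub_zero, ZMod.valMinAbs_natCast_of_le_half le_rfl, Int.natAbs_natCast]
    _ ≤ k * w.length := natAbs_valMinAbs_sub_le_mul_length hk w
    _ ≤ k * D := Nat.mul_le_mul_left k hwD

end diameter_lower

lemma ediam_petersen_lt {n k k' : ℕ} (hk : 1 ≤ k) (hkk' : k < k') (hn : 8 * k' ^ 3 ≤ n) :
    (petersen n k').ediam < (petersen n k).ediam := by
  have hk'3 : 0 < k' ^ 3 := pow_pos (by omega) 3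
  have : NeZero n := ⟨by omega⟩
  by_contra! hle
  have hhalf := half_le_mul_of_ediam_petersen_le hk (hle.trans (ediam_petersen_le (by omega)))
  set Q := n / 2 / k'
  have hQ : Q * k' ≤ n / 2 := Nat.div_mul_le_self _ _
  have hQ' : 4 * k' ^ 2 ≤ Q := by
    rw [Nat.le_div_iff_mul_le (by omega), Nat.le_div_iff_mul_le (by omega)]
    nlinarith
  nlinarith

lemma eq_of_petersen_iso {n n' k k' : ℕ} (φ : petersen n k ≃g petersen n' k') : n = n' := by
  simpa [Nat.card_prod, Nat.card_zmod] using Nat.card_congr φ.toEquiv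

lemma div_two_mul_le_numGP {N K : ℕ} (hK : 16 * K ^ 3 ≤ N) : N / 2 * K ≤ numGP N := by
  set T := Ioc (N / 2) N ×ˢ Icc 1 K
  have hT : ∀ p ∈ T, 8 * p.2 ^ 3 ≤ p.1 ∧ 1 ≤ p.2 ∧ p.1 ≤ N := by
    intro p hp
    simp only [T, mem_product, mem_Ioc, mem_Icc] at hp
    have := Nat.pow_le_pow_left hp.2.2 3
    omega
  have hsub : T ⊆ gpPairs N := fun p hp => by
    obtain ⟨h8, h1, hN⟩ := hT p hp
    have := Nat.le_self_pow (by norm_num : 3 ≠ 0) p.2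
    simp only [gpPairs, mem_filter, mem_product, mem_range]
    omega
  have hinj : Set.InjOn (Quotient.mk petersenSetoid) T := by
    rintro ⟨n, k⟩ hp ⟨n', k'⟩ hp' h
    obtain ⟨φ⟩ := Quotient.exact h
    obtain rfl := eq_of_petersen_iso φ
    obtain ⟨hn, hk, -⟩ := hT _ hp
    obtain ⟨hn', hk', -⟩ := hT _ hp'
    have hdiam := φ.ediam_eq
    rcases lt_trichotomy k k' with hlt | rfl | hgt
    · exact absurd hdiam (ediam_petersen_lt hk hlt hn').ne
    · rfl
    · exact absurd hdiam.symm (ediam_petersen_lt hk' hgt hn).ne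
  calc N / 2 * K ≤ T.card := by
        simp only [T, card_product, Nat.card_Ioc, Nat.card_Icc]
        gcongr <;> omega
    _ = (T.image (Quotient.mk petersenSetoid)).card := (card_image_of_injOn hinj).symm
    _ ≤ numGP N := card_le_card (image_subset_image hsub)

lemma Nat.div_gcd_sub_one_dvd_add_one {n k : ℕ} (hn : 0 < n) (hk : 1 ≤ k)
    (h : k ^ 2 ≡ 1 [MOD n]) : n / Nat.gcd (k - 1) n ∣ k + 1 := by
  have hg : 0 < Nat.gcd (k - 1) n := Nat.gcd_pos_of_pos_right _ hn
  have hsq : n ∣ (k - 1) * (k + 1) := by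
    rw [mul_comm, ← Nat.sq_sub_sq, one_pow]
    exact (Nat.modEq_iff_dvd' (Nat.one_le_pow _ _ hk)).mp h.symm
  refine (Nat.coprime_div_gcd_div_gcd hg).symm.dvd_of_dvd_mul_left
    (Nat.dvd_of_mul_dvd_mul_left hg ?_)
  rwa [← mul_assoc, Nat.mul_div_cancel' (Nat.gcd_dvd_left _ _),
    Nat.mul_div_cancel' (Nat.gcd_dvd_right _ _)]

lemma Nat.eq_of_sq_modEq_one_of_gcd_sub_one_eq {n k k' : ℕ} (hk : 1 ≤ k) (hk' : 1 ≤ k')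
    (hkn : 2 * k ≤ n) (hk'n : 2 * k' ≤ n) (h : k ^ 2 ≡ 1 [MOD n]) (h' : k' ^ 2 ≡ 1 [MOD n])
    (hg : Nat.gcd (k - 1) n = Nat.gcd (k' - 1) n) : k = k' := by
  wlog hle : k' ≤ k generalizing k k'
  · exact (this hk' hk hk'n hkn h' h hg.symm (by omega)).symm
  by_contra hne
  set a := Nat.gcd (k - 1) n
  have ha : a ∣ k - k' := by
    have := Nat.dvd_sub (Nat.gcd_dvd_left (k - 1) n) (hg ▸ Nat.gcd_dvd_left (k' - 1) n)
    rwa [show k - 1 - (k' - 1) = k - k' by omega] at this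
  have hc : n / a ∣ k - k' := by
    have := Nat.dvd_sub (Nat.div_gcd_sub_one_dvd_add_one (by omega) hk h)
      (hg ▸ Nat.div_gcd_sub_one_dvd_add_one (by omega) hk' h')
    rwa [show k + 1 - (k' + 1) = k - k' by omega] at this
  have hgcd : Nat.gcd a (n / a) ≤ 2 := by
    refine Nat.le_of_dvd two_pos ?_
    have := Nat.dvd_sub
      ((Nat.gcd_dvd_right _ _).trans (Nat.div_gcd_sub_one_dvd_add_one (by omega) hk h))
      ((Nat.gcd_dvd_left _ _).trans (Nat.gcd_dvd_left (k - 1) n))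
    rwa [show k + 1 - (k - 1) = 2 by omega] at this
  have hlcm : Nat.lcm a (n / a) ≤ k - k' := Nat.le_of_dvd (by omega) (Nat.lcm_dvd ha hc)
  have hn : Nat.gcd a (n / a) * Nat.lcm a (n / a) = n := by
    rw [Nat.gcd_mul_lcm, Nat.mul_div_cancel' (Nat.gcd_dvd_right _ _)]
  have := Nat.mul_le_mul hgcd hlcm
  omega

lemma numCayleyGP_le_card_dvd (N : ℕ) :
    numCayleyGP N ≤ #{p ∈ Icc 1 N ×ˢ Icc 1 N | p.1 ∣ p.2} := by
  refine card_image_le.trans (card_le_card_of_injOn (fun p => (Nat.gcd (p.2 - 1) p.1, p.1))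
    ?_ ?_)
  · rintro ⟨n, k⟩ hp
    simp only [gpPairs, coe_filter, mem_filter, mem_product, mem_range, Set.mem_ofPred_eq] at hp
    simp only [coe_filter, mem_product, mem_Icc, Set.mem_ofPred_eq]
    refine ⟨⟨⟨Nat.gcd_pos_of_pos_right _ (by omega), ?_⟩, by omega, by omega⟩,
      Nat.gcd_dvd_right _ _⟩
    exact (Nat.gcd_le_right _ (by omega)).trans (by omega)
  · rintro ⟨n, k⟩ hp ⟨n', k'⟩ hp' h
    simp only [gpPairs, coe_filter, mem_filter, mem_product, mem_range,
      Set.mem_ofPred_eq] at hp hp'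
    simp only [Prod.mk.injEq] at h
    obtain rfl := h.2
    obtain rfl := Nat.eq_of_sq_modEq_one_of_gcd_sub_one_eq (by omega) (by omega) (by omega)
      (by omega) hp.2 hp'.2 h.1
    rfl

lemma card_dvd_eq_sum_div (N : ℕ) :
    #{p ∈ Icc 1 N ×ˢ Icc 1 N | p.1 ∣ p.2} = ∑ a ∈ Icc 1 N, N / a := by
  rw [card_filter, sum_product]
  refine sum_congr rfl fun a _ => ?_
  rw [← card_filter, show Icc 1 N = Ioc 0 N from Icc_add_one_left_eq_Ioc 0 N]
  exact Nat.Ioc_filter_dvd_card_eq_div N a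

lemma numCayleyGP_le (N : ℕ) : (numCayleyGP N : ℝ) ≤ N * (1 + Real.log N) := by
  calc (numCayleyGP N : ℝ) ≤ ∑ a ∈ Icc 1 N, ((N / a : ℕ) : ℝ) := by
        exact_mod_cast (numCayleyGP_le_card_dvd N).trans (card_dvd_eq_sum_div N).le
    _ ≤ ∑ a ∈ Icc 1 N, (N : ℝ) * (a : ℝ)⁻¹ := sum_le_sum fun a _ => Nat.cast_div_le
    _ = N * harmonic N := by rw [← mul_sum, harmonic_eq_sum_Icc]; push_cast; rfl
    _ ≤ N * (1 + Real.log N) := by gcongr; exact harmonic_le_one_add_log N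

open Filter Topology

lemma tendsto_one_add_log_div_rpow_atTop {r : ℝ} (hr : 0 < r) :
    Tendsto (fun x : ℝ => (1 + Real.log x) / x ^ r) atTop (𝓝 0) :=
  ((Asymptotics.isLittleO_const_left.2 <| .inr <|
    tendsto_norm_atTop_atTop.comp (tendsto_rpow_atTop hr)).add
    (isLittleO_log_rpow_atTop hr)).tendsto_div_nhds_zero

lemma numCayleyGP_div_numGP_le {N : ℕ} (hN : 16 ^ 4 ≤ N) :
    (numCayleyGP N : ℝ) / numGP N ≤ 6 * ((1 + Real.log N) / (N : ℝ) ^ (4⁻¹ : ℝ)) := by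
  set r := (N : ℝ) ^ (4⁻¹ : ℝ)
  set K := ⌊r⌋₊
  have h16r : 16 ≤ r := by
    rw [Real.le_rpow_inv_iff_of_pos (by norm_num) (Nat.cast_nonneg _) (by norm_num)]
    exact_mod_cast hN
  have h16K : 16 ≤ K := Nat.le_floor (by exact_mod_cast h16r)
  have hK4 : K ^ 4 ≤ N := by
    have hr4 : r ^ 4 = N := by
      simpa using Real.rpow_inv_natCast_pow (Nat.cast_nonneg N) (n := 4) (by norm_num)
    have := pow_le_pow_left₀ (Nat.cast_nonneg _) (Nat.floor_le (h16r.trans' (by norm_num))) 4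
    exact_mod_cast hr4 ▸ this
  have hrK : r ≤ 2 * K := by
    linarith [Nat.lt_floor_add_one r, (Nat.cast_le.2 h16K : (16 : ℝ) ≤ K)]
  have hA : (N : ℝ) * r / 6 ≤ numGP N := by
    have hA := div_two_mul_le_numGP (N := N) (K := K) (by nlinarith)
    have hN2 : (N : ℝ) / 3 ≤ (N / 2 : ℕ) := by
      rw [div_le_iff₀ (by norm_num)]
      exact_mod_cast (by omega : N ≤ N / 2 * 3)
    calc (N : ℝ) * r / 6 = N / 3 * (r / 2) := by ring
      _ ≤ (N / 2 : ℕ) * K := by gcongr; linarith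
      _ ≤ numGP N := by exact_mod_cast hA
  have hNpos : (0 : ℝ) < N := by exact_mod_cast (by omega : 0 < N)
  calc (numCayleyGP N : ℝ) / numGP N ≤ N * (1 + Real.log N) / (N * r / 6) :=
        div_le_div₀ (by positivity) (numCayleyGP_le N) (by positivity) hA
    _ = 6 * ((1 + Real.log N) / r) := by field_simp

/-- Almost all generalised Petersen graphs are not Cayley graphs:
`B(N) / A(N) → 0` as `N → ∞`. -/
theorem almost_all_petersen_not_cayley :
    Filter.Tendsto (fun N : ℕ => (numCayleyGP N : ℝ) / (numGP N : ℝ))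
      Filter.atTop (nhds 0) := by
  have hlim : Tendsto (fun N : ℕ => 6 * ((1 + Real.log N) / (N : ℝ) ^ (4⁻¹ : ℝ)))
      atTop (𝓝 0) := by
    simpa using ((tendsto_one_add_log_div_rpow_atTop (by norm_num)).comp
      tendsto_natCast_atTop_atTop).const_mul 6
  refine squeeze_zero' (.of_forall fun N => by positivity) ?_ hlim
  filter_upwards [eventually_ge_atTop (16 ^ 4)] with N hN using numCayleyGP_div_numGP_le hN
end

section
/- Let n ≥ 4 and 1 ≤ k ≤ n/2 be integers. Then the expanding constant of the generalised Petersen graph P(n,k) satisfies h(P(n,k)) < √(24π/(⌊√n⌋ − 1)); equivalently, there exists a nonempty set F of vertices of P(n,k) with |F| ≤ n such that the number of edges of P(n,k) with exactly one endpoint in F is less than √(24π/(⌊√n⌋ − 1))·|F|. -/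
open scoped Classical

/-- The number of edges of `G` with exactly one endpoint in `F`. -/
noncomputable def edgeBoundary {V : Type*} (G : SimpleGraph V) (F : Finset V) : ℕ :=
  Set.ncard {e : Sym2 V | e ∈ G.edgeSet ∧ ∃ v w, e = s(v, w) ∧ v ∈ F ∧ w ∉ F}

/-- The expanding (Cheeger) constant of a finite graph:
`h(G) = min { |∂F| / |F| : F ⊆ V, F ≠ ∅, |F| ≤ |V| / 2 }`. -/
noncomputable def expandingConstant {V : Type*} [Fintype V] (G : SimpleGraph V) : ℝ :=
  ⨅ F : {F : Finset V // F.Nonempty ∧ 2 * F.card ≤ Fintype.card V},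
    (edgeBoundary G F.1 : ℝ) / (F.1.card : ℝ)

/-!
Write `‖x‖` for the distance from `x ∈ ℤ/n` to `0` and `⟨x⟩` for the signed representative
realising it. For `F = I × {a, b}` with `I ⊆ ℤ/n`, the boundary edges are counted by the points
of `I` that the translations by `±1` and `±k` move out of `I`; for small `n`, `I = {0}` gives
ratio `4/2`. Otherwise let `s = ⌊√n⌋` and, by Dirichlet's approximation theorem, take `d ≤ s`
minimal with `s‖dk‖ < n`. For `0 < c < d` minimality gives `‖dk‖ < ‖ck‖`, so `d⟨ck⟩ - c⟨dk⟩`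
is a nonzero multiple of `n` and `‖ck‖ ≥ n/2d ≥ M := ⌊n/2d⌋`. Hence the `d` intervals
`ek + [0, M)`, `e < d`, are disjoint and their union `I` has `dM ≈ n/2` elements. Translation by
`±1` moves out only the `2d` interval ends, translation by `±k` at most `‖dk‖` points each, since
`dk + [0, M)` is `[0, M)` shifted by `⟨dk⟩`. The ratio is thus at most
`(2d + 2‖dk‖)/(2dM) ≤ 8/s`.
-/

open Finset

lemma edgeBoundary_le_card {V : Type*} (G : SimpleGraph V) (F : Finset V) (E : Finset (Sym2 V))
    (h : ∀ v ∈ F, ∀ w ∉ F, G.Adj v w → s(v, w) ∈ E) :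
    edgeBoundary G F ≤ #E := by
  rw [edgeBoundary, ← Set.ncard_coe_finset E]
  refine Set.ncard_le_ncard ?_ E.finite_toSet
  rintro _ ⟨hadj, v, w, rfl, hv, hw⟩
  exact h v hv w hw hadj

lemma expandingConstant_le {V : Type*} [Fintype V] (G : SimpleGraph V) {F : Finset V}
    (hF : F.Nonempty) (hFV : 2 * #F ≤ Fintype.card V) :
    expandingConstant G ≤ edgeBoundary G F / #F := by
  refine ciInf_le ⟨0, ?_⟩ (⟨F, hF, hFV⟩ : {F : Finset V // F.Nonempty ∧ 2 * #F ≤ Fintype.card V})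
  rintro _ ⟨F', rfl⟩
  positivity

lemma Int.cast_toNat_of_nonneg {R : Type*} [AddGroupWithOne R] {z : ℤ} (hz : 0 ≤ z) :
    ((z.toNat : ℕ) : R) = z := by
  rw [← Int.cast_natCast, Int.toNat_of_nonneg hz]

namespace ZMod

variable {n : ℕ}

lemma natAbs_valMinAbs_le_natAbs [NeZero n] {a : ZMod n} {z : ℤ} (h : (z : ZMod n) = a) :
    a.valMinAbs.natAbs ≤ z.natAbs :=
  natAbs_min_of_le_div_two n _ _ (by rw [coe_valMinAbs, h]) (natAbs_valMinAbs_le a)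

lemma exists_mul_natAbs_valMinAbs_lt [NeZero n] (a : ZMod n) {s : ℕ} (hs : 0 < s) :
    ∃ d : ℕ, 0 < d ∧ d ≤ s ∧ s * ((d : ZMod n) * a).valMinAbs.natAbs < n := by
  have hn : (0 : ℝ) < n := by exact_mod_cast Nat.pos_of_neZero n
  obtain ⟨d, hd, hds, happrox⟩ := Real.exists_nat_abs_mul_sub_round_le ((a.val : ℝ) / n) hs
  set z : ℤ := d * a.val - round ((d : ℝ) * (a.val / n)) * n
  have hz : (z : ZMod n) = d * a := by simp [z]
  have hzn : ((s + 1) * z.natAbs : ℝ) ≤ n := by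
    have hzr : (z : ℝ) = n * ((d : ℝ) * (a.val / n) - round ((d : ℝ) * (a.val / n))) := by
      push_cast [z]
      field_simp
    rw [Nat.cast_natAbs, Int.cast_abs, hzr, abs_mul, abs_of_pos hn]
    calc ((s + 1) * (n * _) : ℝ) ≤ (s + 1) * (n * (1 / (s + 1))) := by gcongr
      _ = n := by field_simp
  have hzn' : (s + 1) * z.natAbs ≤ n := by exact_mod_cast hzn
  refine ⟨d, hd, hds, ?_⟩
  calc s * ((d : ZMod n) * a).valMinAbs.natAbs ≤ s * z.natAbs :=
        Nat.mul_le_mul_left s (natAbs_valMinAbs_le_natAbs hz)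
    _ < n := by
      rcases Nat.eq_zero_or_pos z.natAbs with h0 | hpos
      · simpa [h0] using Nat.pos_of_neZero n
      · nlinarith

lemma le_mul_natAbs_valMinAbs_add_mul (a : ZMod n) {c d : ℕ}
    (h : d * ((c : ZMod n) * a).valMinAbs.natAbs ≠ c * ((d : ZMod n) * a).valMinAbs.natAbs) :
    n ≤ d * ((c : ZMod n) * a).valMinAbs.natAbs + c * ((d : ZMod n) * a).valMinAbs.natAbs := by
  set D : ℤ := d * ((c : ZMod n) * a).valMinAbs - c * ((d : ZMod n) * a).valMinAbs
  have hdvd : (n : ℤ) ∣ D := by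
    rw [← intCast_zmod_eq_zero_iff_dvd]
    push_cast [D, coe_valMinAbs]
    ring
  have hD : D ≠ 0 := by
    intro h0
    apply h
    simpa [Int.natAbs_mul] using congrArg Int.natAbs (sub_eq_zero.mp h0)
  calc n ≤ D.natAbs := Nat.le_of_dvd (Int.natAbs_pos.mpr hD) (Int.natCast_dvd.mp hdvd)
    _ ≤ _ := (Int.natAbs_sub_le _ _).trans (by simp [Int.natAbs_mul])

lemma exists_best_approximation [NeZero n] (a : ZMod n) {s : ℕ} (hs : 0 < s) :
    ∃ d : ℕ, 0 < d ∧ d ≤ s ∧ s * ((d : ZMod n) * a).valMinAbs.natAbs < n ∧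
      ∀ c : ℕ, 0 < c → c < d → n ≤ 2 * d * ((c : ZMod n) * a).valMinAbs.natAbs := by
  have hex := exists_mul_natAbs_valMinAbs_lt a hs
  let P : ℕ → Prop := fun d => 0 < d ∧ s * ((d : ZMod n) * a).valMinAbs.natAbs < n
  have hP : ∃ d, P d := hex.imp fun d ⟨hd, _, h⟩ => ⟨hd, h⟩
  obtain ⟨d₀, hd₀, hd₀s, hd₀n⟩ := hex
  obtain ⟨hd, hdn⟩ := Nat.find_spec hP
  refine ⟨Nat.find hP, hd, (Nat.find_min' hP ⟨hd₀, hd₀n⟩).trans hd₀s, hdn, fun c hc hcd => ?_⟩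
  set d := Nat.find hP
  have hcn : n ≤ s * ((c : ZMod n) * a).valMinAbs.natAbs := by
    by_contra! h
    exact Nat.find_min hP hcd ⟨hc, h⟩
  have hlt : ((d : ZMod n) * a).valMinAbs.natAbs < ((c : ZMod n) * a).valMinAbs.natAbs :=
    lt_of_mul_lt_mul_left (hdn.trans_le hcn) s.zero_le
  have hcd' := Nat.mul_lt_mul_of_le_of_lt hcd.le hlt hd
  have hdet := le_mul_natAbs_valMinAbs_add_mul a hcd'.ne'
  linarith

end ZMod

def exitSet {α : Type*} [Add α] [DecidableEq α] (I : Finset α) (t : α) : Finset α :=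
  {i ∈ I | i + t ∉ I}

lemma card_range_filter_add_notMem_Ico_le (M : ℕ) (β : ℤ) :
    #((range M).filter fun x : ℕ => (x : ℤ) + β ∉ Ico (0 : ℤ) M) ≤ β.natAbs := by
  rcases le_or_gt 0 β with hβ | hβ
  · calc _ ≤ #(Ico (M - β.natAbs) M) := card_le_card fun x hx => by
          simp only [mem_filter, mem_range, mem_Ico] at hx ⊢
          omega
      _ ≤ β.natAbs := by simp only [Nat.card_Ico]; omega
  · calc _ ≤ #(range β.natAbs) := card_le_card fun x hx => by
          simp only [mem_filter, mem_range, mem_Ico] at hx ⊢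
          omega
      _ = β.natAbs := card_range _

section LatticeBox

variable {n : ℕ} (a : ZMod n) (d M : ℕ)

def latticeBox : Finset (ZMod n) :=
  (range d ×ˢ range M).image fun p => (p.1 : ZMod n) * a + p.2

variable {a d M}

lemma mem_latticeBox {i : ZMod n} :
    i ∈ latticeBox a d M ↔ ∃ e < d, ∃ x < M, (e : ZMod n) * a + x = i := by
  simp [latticeBox, and_assoc]

lemma card_latticeBox [NeZero n] (hM : M ≤ n)
    (hsep : ∀ c, 0 < c → c < d → M ≤ ((c : ZMod n) * a).valMinAbs.natAbs) :
    #(latticeBox a d M) = d * M := by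
  rw [latticeBox, card_image_of_injOn, card_product, card_range, card_range]
  rintro ⟨e, x⟩ hex ⟨e', x'⟩ hex' heq
  simp only [coe_product, coe_range, Set.mem_prod, Set.mem_Iio] at hex hex' heq
  wlog hee : e ≤ e' generalizing e x e' x'
  · exact (this e' x' e x heq.symm hex' hex (le_of_not_ge hee)).symm
  obtain rfl : e = e' := by
    by_contra hne
    have hshift : ((x - x' : ℤ) : ZMod n) = ((e' - e : ℕ) : ZMod n) * a := by
      push_cast [Nat.cast_sub hee]
      linear_combination heq
    have hsmall := ZMod.natAbs_valMinAbs_le_natAbs hshift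
    have hlarge := hsep (e' - e) (by omega) (by omega)
    omega
  have hx : (x : ZMod n) = x' := by simpa using heq
  rw [ZMod.natCast_eq_natCast_iff', Nat.mod_eq_of_lt (by omega), Nat.mod_eq_of_lt (by omega)] at hx
  rw [hx]

lemma card_exitSet_latticeBox_one_le : #(exitSet (latticeBox a d M) 1) ≤ d := by
  calc _ ≤ #((range d).image fun e : ℕ => (e : ZMod n) * a + (M - 1 : ℕ)) :=
        card_le_card fun i hi => by
          obtain ⟨hi, hi1⟩ := mem_filter.mp hi
          obtain ⟨e, he, x, hx, rfl⟩ := mem_latticeBox.mp hi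
          have hxM : x + 1 = M := by
            by_contra hlt
            exact hi1 (mem_latticeBox.mpr ⟨e, he, x + 1, by omega, by push_cast; ring⟩)
          exact mem_image.mpr ⟨e, mem_range.mpr he, by rw [← hxM, Nat.add_sub_cancel]⟩
    _ ≤ d := card_image_le.trans (card_range d).le

lemma card_exitSet_latticeBox_neg_one_le : #(exitSet (latticeBox a d M) (-1)) ≤ d := by
  calc _ ≤ #((range d).image fun e : ℕ => (e : ZMod n) * a) :=
        card_le_card fun i hi => by
          obtain ⟨hi, hi1⟩ := mem_filter.mp hi
          obtain ⟨e, he, x, hx, rfl⟩ := mem_latticeBox.mp hi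
          obtain rfl : x = 0 := by
            by_contra hpos
            refine hi1 (mem_latticeBox.mpr ⟨e, he, x - 1, by omega, ?_⟩)
            push_cast [Nat.one_le_iff_ne_zero.mpr hpos]
            ring
          exact mem_image.mpr ⟨e, mem_range.mpr he, by simp⟩
    _ ≤ d := card_image_le.trans (card_range d).le

lemma card_exitSet_latticeBox_le [NeZero n] :
    #(exitSet (latticeBox a d M) a) ≤ ((d : ZMod n) * a).valMinAbs.natAbs := by
  set β := ((d : ZMod n) * a).valMinAbs
  calc _ ≤ #(((range M).filter fun x : ℕ => (x : ℤ) + β ∉ Ico (0 : ℤ) M).image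
          fun x : ℕ => ((d - 1 : ℕ) : ZMod n) * a + x) :=
        card_le_card fun i hi => by
          obtain ⟨hi, hia⟩ := mem_filter.mp hi
          obtain ⟨e, he, x, hx, rfl⟩ := mem_latticeBox.mp hi
          have hed : e + 1 = d := by
            by_contra hlt
            exact hia (mem_latticeBox.mpr ⟨e + 1, by omega, x, hx, by push_cast; ring⟩)
          refine mem_image.mpr ⟨x, mem_filter.mpr ⟨mem_range.mpr hx, fun hxβ => hia ?_⟩,
            by rw [← hed, Nat.add_sub_cancel]⟩
          obtain ⟨h0, hM⟩ := mem_Ico.mp hxβ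
          refine mem_latticeBox.mpr ⟨0, by omega, ((x : ℤ) + β).toNat, by omega, ?_⟩
          have hβ : (β : ZMod n) = d * a := ZMod.coe_valMinAbs _
          rw [← hed] at hβ
          push_cast [Int.cast_toNat_of_nonneg h0] at hβ ⊢
          linear_combination hβ
    _ ≤ β.natAbs := card_image_le.trans (card_range_filter_add_notMem_Ico_le M β)

lemma card_exitSet_latticeBox_neg_le [NeZero n] :
    #(exitSet (latticeBox a d M) (-a)) ≤ ((d : ZMod n) * a).valMinAbs.natAbs := by
  set β := ((d : ZMod n) * a).valMinAbs
  calc _ ≤ #(((range M).filter fun x : ℕ => (x : ℤ) + -β ∉ Ico (0 : ℤ) M).image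
          fun x : ℕ => (x : ZMod n)) :=
        card_le_card fun i hi => by
          obtain ⟨hi, hia⟩ := mem_filter.mp hi
          obtain ⟨e, he, x, hx, rfl⟩ := mem_latticeBox.mp hi
          obtain rfl : e = 0 := by
            by_contra hpos
            refine hia (mem_latticeBox.mpr ⟨e - 1, by omega, x, hx, ?_⟩)
            push_cast [Nat.one_le_iff_ne_zero.mpr hpos]
            ring
          refine mem_image.mpr ⟨x, mem_filter.mpr ⟨mem_range.mpr hx, fun hxβ => hia ?_⟩,
            by simp⟩
          obtain ⟨h0, hM⟩ := mem_Ico.mp hxβ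
          refine mem_latticeBox.mpr ⟨d - 1, by omega, ((x : ℤ) + -β).toNat, by omega, ?_⟩
          have hβ : (β : ZMod n) = d * a := ZMod.coe_valMinAbs _
          push_cast [Int.cast_toNat_of_nonneg h0, Nat.one_le_iff_ne_zero.mpr (by omega : d ≠ 0)]
          linear_combination -hβ
    _ ≤ β.natAbs := card_image_le.trans (by simpa using card_range_filter_add_notMem_Ico_le M (-β))

end LatticeBox

lemma edgeBoundary_petersen_le (n k : ℕ) (I : Finset (ZMod n)) :
    edgeBoundary (petersen n k) (I ×ˢ univ) ≤
      #(exitSet I 1) + #(exitSet I (-1)) + #(exitSet I k) + #(exitSet I (-k)) := by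
  refine (edgeBoundary_le_card _ _
    ((((exitSet I 1).image fun i => s((i, false), (i + 1, false))) ∪
      (exitSet I (-1)).image fun i => s((i, false), (i + -1, false))) ∪
      ((exitSet I k).image fun i => s((i, true), (i + k, true))) ∪
      (exitSet I (-k)).image fun i => s((i, true), (i + -k, true))) ?_).trans ?_
  · rintro ⟨i, b⟩ hi ⟨j, c⟩ hj hadj
    simp only [mem_product, mem_univ, and_true] at hi hj
    simp only [petersen, SimpleGraph.fromRel_adj] at hadj
    simp only [exitSet, mem_union, mem_image, mem_filter]
    rcases hadj.2 with (⟨rfl, rfl, rfl⟩ | ⟨rfl, rfl, rfl⟩ | ⟨rfl, rfl, rfl⟩) |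
      (⟨rfl, rfl, hij⟩ | ⟨rfl, rfl, hij⟩ | ⟨rfl, rfl, hij⟩)
    · exact Or.inl (Or.inl (Or.inl ⟨i, ⟨hi, hj⟩, rfl⟩))
    · exact absurd hi hj
    · exact Or.inl (Or.inr ⟨i, ⟨hi, hj⟩, rfl⟩)
    · obtain rfl : j = i + -1 := eq_add_neg_of_add_eq hij.symm
      exact Or.inl (Or.inl (Or.inr ⟨i, ⟨hi, hj⟩, rfl⟩))
    · exact absurd (hij ▸ hi) hj
    · obtain rfl : j = i + -k := eq_add_neg_of_add_eq hij.symm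
      exact Or.inr ⟨i, ⟨hi, hj⟩, rfl⟩
  · refine (card_union_le _ _).trans (add_le_add ((card_union_le _ _).trans
      (add_le_add ((card_union_le _ _).trans (add_le_add card_image_le card_image_le))
        card_image_le)) card_image_le)

lemma expandingConstant_petersen_le (n k : ℕ) [NeZero n] {I : Finset (ZMod n)}
    (hI : I.Nonempty) (hIn : 2 * #I ≤ n) :
    expandingConstant (petersen n k) ≤
      (#(exitSet I 1) + #(exitSet I (-1)) + #(exitSet I k) + #(exitSet I (-k)) : ℕ) /
        (2 * #I : ℕ) := by
  have hcard : #(I ×ˢ (univ : Finset Bool)) = 2 * #I := by simp [mul_comm]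
  refine (expandingConstant_le _ (hI.product univ_nonempty) ?_).trans ?_
  · rw [hcard, Fintype.card_prod, ZMod.card, Fintype.card_bool]
    omega
  · rw [hcard]
    gcongr
    exact_mod_cast edgeBoundary_petersen_le n k I

lemma expandingConstant_petersen_le_two (n k : ℕ) [NeZero n] (hn : 2 ≤ n) :
    expandingConstant (petersen n k) ≤ 2 := by
  have hsingle (t : ZMod n) : #(exitSet {0} t) ≤ 1 :=
    (card_filter_le _ _).trans (card_singleton _).le
  refine (expandingConstant_petersen_le n k (singleton_nonempty 0) (by simpa using hn)).trans ?_
  rw [div_le_iff₀ (by simp), card_singleton]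
  calc _ ≤ ((1 + 1 + 1 + 1 : ℕ) : ℝ) := by gcongr <;> exact hsingle _
    _ = 2 * (2 * 1 : ℕ) := by norm_num

lemma expandingConstant_petersen_le_eight_div_sqrt (n k : ℕ) [NeZero n] (hs : 4 ≤ Nat.sqrt n) :
    expandingConstant (petersen n k) ≤ 8 / Nat.sqrt n := by
  set s := Nat.sqrt n
  have hsn : s * s ≤ n := Nat.sqrt_le n
  obtain ⟨d, hd, hds, hdk, hsep⟩ := ZMod.exists_best_approximation (k : ZMod n) (s := s) (by omega)
  set r := ((d : ZMod n) * k).valMinAbs.natAbs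
  set M := n / (2 * d)
  have hMn : 2 * d * M ≤ n := Nat.mul_div_le n (2 * d)
  have hnM : n < 2 * d * M + 2 * d := by
    have : 2 * d * M + n % (2 * d) = n := Nat.div_add_mod n (2 * d)
    have := Nat.mod_lt n (by omega : 2 * d > 0)
    linarith
  have hM : 0 < M := Nat.div_pos (by nlinarith) (by omega)
  have hcard : #(latticeBox (k : ZMod n) d M) = d * M :=
    card_latticeBox (by nlinarith) fun c hc hcd => Nat.div_le_of_le_mul (hsep c hc hcd)
  have hI : (latticeBox (k : ZMod n) d M).Nonempty := by
    rw [← card_pos, hcard]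
    positivity
  refine (expandingConstant_petersen_le n k hI (by rw [hcard]; linarith)).trans ?_
  rw [hcard, div_le_div_iff₀ (by positivity) (by positivity)]
  have h₁ := card_exitSet_latticeBox_one_le (a := (k : ZMod n)) (d := d) (M := M)
  have h₂ := card_exitSet_latticeBox_neg_one_le (a := (k : ZMod n)) (d := d) (M := M)
  have h₃ := card_exitSet_latticeBox_le (a := (k : ZMod n)) (d := d) (M := M)
  have h₄ := card_exitSet_latticeBox_neg_le (a := (k : ZMod n)) (d := d) (M := M)
  have hsd : s * d ≤ n := (Nat.mul_le_mul_left s hds).trans hsn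
  have h4d : 4 * d ≤ n := (Nat.mul_le_mul_right d hs).trans (by linarith [Nat.mul_comm s d])
  calc _ ≤ ((2 * d + 2 * r : ℕ) : ℝ) * s :=
        mul_le_mul_of_nonneg_right (Nat.cast_le.mpr (by omega)) s.cast_nonneg
    _ ≤ 8 * (2 * (d * M) : ℕ) := by
        exact_mod_cast (by nlinarith : (2 * d + 2 * r) * s ≤ 8 * (2 * (d * M)))

theorem petersen_expanding_constant_lt_general (n k : ℕ) [NeZero n] (hn : 4 ≤ n) :
    expandingConstant (petersen n k) <
      Real.sqrt (24 * Real.pi / ((Nat.sqrt n : ℝ) - 1)) := by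
  have hs : (2 : ℝ) ≤ Nat.sqrt n := by exact_mod_cast Nat.le_sqrt.mpr hn
  have hπ := Real.pi_gt_three
  rcases lt_or_ge (Nat.sqrt n) 4 with hsmall | hlarge
  · have hs3 : (Nat.sqrt n : ℝ) ≤ 3 := by exact_mod_cast Nat.le_of_lt_succ hsmall
    calc _ ≤ 2 := expandingConstant_petersen_le_two n k (by omega)
      _ < _ := by
        rw [Real.lt_sqrt zero_le_two, lt_div_iff₀ (by linarith)]
        nlinarith
  · calc _ ≤ (8 / Nat.sqrt n : ℝ) := expandingConstant_petersen_le_eight_div_sqrt n k hlarge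
      _ < _ := by
        rw [Real.lt_sqrt (by positivity), div_pow, div_lt_div_iff₀ (by positivity) (by linarith)]
        nlinarith

/-- For `n ≥ 4` and `1 ≤ k ≤ n/2`, the expanding constant of the generalised
Petersen graph satisfies `h(P(n,k)) < √(24π / (⌊√n⌋ - 1))`. -/
theorem petersen_expanding_constant_lt (n k : ℕ) [NeZero n] (hn : 4 ≤ n)
    (hk1 : 1 ≤ k) (hk2 : 2 * k ≤ n) :
    expandingConstant (petersen n k) <
      Real.sqrt (24 * Real.pi / ((Nat.sqrt n : ℝ) - 1)) :=
  petersen_expanding_constant_lt_general n k hn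
end

section
/- Let n ≥ 4 and k be positive integers with k ≤ n/2. Then there exists an integer j with 1 ≤ j < n such that both ‖j/n‖ ≤ 1/(⌊√n⌋ − 1) and ‖jk/n‖ ≤ 1/(⌊√n⌋ − 1). -/
/-!
Apply Dirichlet's approximation theorem to `k / n` with `Q = ⌊√n⌋`: some `1 ≤ j ≤ Q` has
`‖jk/n‖ ≤ 1/(Q+1)`, and since `Q² ≤ n` such a `j` also satisfies `‖j/n‖ ≤ j/n ≤ 1/Q`.
-/

/-- The distance from a real number `x` to the nearest integer. -/
noncomputable def distToInt (x : ℝ) : ℝ := ⨅ m : ℤ, |x - (m : ℝ)|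

lemma distToInt_le_abs_sub (x : ℝ) (m : ℤ) : distToInt x ≤ |x - m| :=
  ciInf_le ⟨0, by rintro y ⟨i, rfl⟩; exact abs_nonneg _⟩ m

lemma distToInt_le_abs (x : ℝ) : distToInt x ≤ |x| := by
  simpa using distToInt_le_abs_sub x 0

lemma exists_nat_distToInt_mul_le (ξ : ℝ) {Q : ℕ} (hQ : 0 < Q) :
    ∃ j : ℕ, 0 < j ∧ j ≤ Q ∧ distToInt (j * ξ) ≤ 1 / (Q + 1) := by
  obtain ⟨j, hj₀, hjQ, hj⟩ := Real.exists_nat_abs_mul_sub_round_le ξ hQ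
  exact ⟨j, hj₀, hjQ, (distToInt_le_abs_sub _ _).trans hj⟩

lemma Nat.two_le_sqrt {n : ℕ} (hn : 4 ≤ n) : 2 ≤ Nat.sqrt n :=
  Nat.le_sqrt.2 hn

lemma Nat.cast_div_le_inv_sqrt {j n : ℕ} (hj : j ≤ Nat.sqrt n) (hn : 0 < Nat.sqrt n) :
    (j : ℝ) / n ≤ 1 / Nat.sqrt n := by
  have hsq : (Nat.sqrt n : ℝ) * Nat.sqrt n ≤ n := by exact_mod_cast Nat.sqrt_le n
  have hq : (0 : ℝ) < Nat.sqrt n := by exact_mod_cast hn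
  rw [div_le_div_iff₀ (by nlinarith) hq]
  calc (j : ℝ) * Nat.sqrt n ≤ Nat.sqrt n * Nat.sqrt n := by gcongr
    _ ≤ 1 * n := by linarith

theorem petersen_diophantine_index_general (n k : ℕ) (hn : 4 ≤ n) :
    ∃ j : ℕ, 1 ≤ j ∧ j < n ∧
      distToInt ((j : ℝ) / (n : ℝ)) ≤ 1 / ((Nat.sqrt n : ℝ) - 1) ∧
      distToInt ((j : ℝ) * (k : ℝ) / (n : ℝ)) ≤ 1 / ((Nat.sqrt n : ℝ) - 1) := by
  have hq : 2 ≤ Nat.sqrt n := Nat.two_le_sqrt hn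
  have hq' : (2 : ℝ) ≤ Nat.sqrt n := by exact_mod_cast hq
  obtain ⟨j, hj₀, hjq, hjk⟩ := exists_nat_distToInt_mul_le ((k : ℝ) / n) (by omega : 0 < Nat.sqrt n)
  refine ⟨j, hj₀, hjq.trans_lt (Nat.sqrt_lt_self (by omega)), ?_, ?_⟩
  · calc distToInt ((j : ℝ) / n) ≤ |(j : ℝ) / n| := distToInt_le_abs _
      _ = (j : ℝ) / n := abs_of_nonneg (by positivity)
      _ ≤ 1 / Nat.sqrt n := Nat.cast_div_le_inv_sqrt hjq (by omega)
      _ ≤ 1 / ((Nat.sqrt n : ℝ) - 1) := one_div_le_one_div_of_le (by linarith) (by linarith)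
  · calc distToInt ((j : ℝ) * k / n) = distToInt (j * ((k : ℝ) / n)) := by rw [mul_div_assoc]
      _ ≤ 1 / (Nat.sqrt n + 1) := hjk
      _ ≤ 1 / ((Nat.sqrt n : ℝ) - 1) := one_div_le_one_div_of_le (by linarith) (by linarith)

/-- For `n ≥ 4` and `1 ≤ k ≤ n/2` there exists `1 ≤ j < n` with both `j/n`
and `jk/n` within `1 / (⌊√n⌋ - 1)` of an integer. -/
theorem petersen_diophantine_index (n k : ℕ) (hn : 4 ≤ n) (hk1 : 1 ≤ k)
    (hk2 : 2 * k ≤ n) :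
    ∃ j : ℕ, 1 ≤ j ∧ j < n ∧
      distToInt ((j : ℝ) / (n : ℝ)) ≤ 1 / ((Nat.sqrt n : ℝ) - 1) ∧
      distToInt ((j : ℝ) * (k : ℝ) / (n : ℝ)) ≤ 1 / ((Nat.sqrt n : ℝ) - 1) :=
  petersen_diophantine_index_general n k hn
end

section
/- Let n ≥ 4 and 1 ≤ k ≤ n/2 be integers. Then there exists an integer j with 1 ≤ j ≤ n − 1 such that cos(2πj/n) + cos(2πjk/n) + √((cos(2πj/n) − cos(2πjk/n))² + 1) > 3 − 4π/(⌊√n⌋ − 1). -/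
/-!
Take `j ≤ ⌊√n⌋` from Dirichlet's approximation theorem applied to `k / n`, so that `jk/n` lies
within `1/⌊√n⌋` of an integer, while `j/n ≤ ⌊√n⌋/n ≤ 1/⌊√n⌋` holds anyway. Both cosines are then
at least `1 - 2π²/⌊√n⌋²` by `cos x ≥ 1 - x²/2`, the square root is at least `1`, and
`4π²/s² < 4π/(s - 1)` for `s = ⌊√n⌋ ≥ 2` because `π < 4 ≤ s²/(s - 1)`.
-/

open Real

lemma one_sub_two_mul_pi_sq_mul_sq_le_cos_two_pi_mul {x δ : ℝ} (m : ℤ) (h : |x - m| ≤ δ) :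
    1 - 2 * π ^ 2 * δ ^ 2 ≤ cos (2 * π * x) := by
  have hsq : (x - m) ^ 2 ≤ δ ^ 2 := sq_le_sq' (abs_le.mp h).1 (abs_le.mp h).2
  calc 1 - 2 * π ^ 2 * δ ^ 2 ≤ 1 - (2 * π * (x - m)) ^ 2 / 2 := by nlinarith [sq_nonneg π]
    _ ≤ cos (2 * π * (x - m)) := one_sub_sq_div_two_le_cos
    _ = cos (2 * π * x) := by
      rw [show 2 * π * (x - m) = 2 * π * x - m * (2 * π) by ring, cos_sub_int_mul_two_pi]

lemma natCast_div_le_inv_sqrt {j n : ℕ} (hj : j ≤ Nat.sqrt n) (hn : 0 < n) :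
    (j : ℝ) / n ≤ (Nat.sqrt n : ℝ)⁻¹ := by
  have hs : 0 < Nat.sqrt n := Nat.sqrt_pos.mpr hn
  have hsq : ((Nat.sqrt n : ℕ) : ℝ) ^ 2 ≤ n := by exact_mod_cast Nat.sqrt_le' n
  calc (j : ℝ) / n ≤ Nat.sqrt n / (Nat.sqrt n : ℝ) ^ 2 :=
        div_le_div₀ (by positivity) (by exact_mod_cast hj) (by positivity) hsq
    _ = (Nat.sqrt n : ℝ)⁻¹ := by field_simp

lemma pi_sq_mul_inv_sq_lt_pi_div_sub_one {s : ℝ} (hs : 2 ≤ s) :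
    π ^ 2 * (s⁻¹) ^ 2 < π / (s - 1) := by
  have hs1 : 0 < s - 1 := by linarith
  rw [lt_div_iff₀ hs1, show π ^ 2 * s⁻¹ ^ 2 * (s - 1) = π * (π * (s - 1) / s ^ 2) by ring]
  refine mul_lt_of_lt_one_right pi_pos ((div_lt_one (by positivity)).mpr ?_)
  nlinarith [pi_lt_four, sq_nonneg (s - 2)]

lemma one_le_sqrt_sq_add_one (x : ℝ) : 1 ≤ √(x ^ 2 + 1) :=
  one_le_sqrt.mpr (by nlinarith [sq_nonneg x])

theorem petersen_eigenvalue_formula_close_to_three_general (n k : ℕ) (hn : 4 ≤ n) :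
    ∃ j : ℕ, 1 ≤ j ∧ j ≤ n - 1 ∧
      cos (2 * π * (j : ℝ) / (n : ℝ)) + cos (2 * π * (j : ℝ) * (k : ℝ) / (n : ℝ)) +
        Real.sqrt ((cos (2 * π * (j : ℝ) / (n : ℝ)) -
          cos (2 * π * (j : ℝ) * (k : ℝ) / (n : ℝ))) ^ 2 + 1) >
      3 - 4 * π / ((Nat.sqrt n : ℝ) - 1) := by
  set s := Nat.sqrt n
  have hs : 2 ≤ s := Nat.le_sqrt.mpr (by omega)
  have hsn : s < n := Nat.sqrt_lt_self (by omega)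
  obtain ⟨j, hj0, hjs, hdirichlet⟩ :=
    Real.exists_nat_abs_mul_sub_round_le ((k : ℝ) / n) (by omega : 0 < s)
  refine ⟨j, hj0, by omega, ?_⟩
  have hcos₁ : 1 - 2 * π ^ 2 * (s⁻¹ : ℝ) ^ 2 ≤ cos (2 * π * (j : ℝ) / n) := by
    rw [mul_div_assoc]
    refine one_sub_two_mul_pi_sq_mul_sq_le_cos_two_pi_mul 0 ?_
    rw [Int.cast_zero, sub_zero, abs_of_nonneg (by positivity)]
    exact natCast_div_le_inv_sqrt hjs (by omega)
  have hcos₂ : 1 - 2 * π ^ 2 * (s⁻¹ : ℝ) ^ 2 ≤ cos (2 * π * (j : ℝ) * k / n) := by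
    rw [show 2 * π * (j : ℝ) * k / n = 2 * π * (j * (k / n)) by ring]
    refine one_sub_two_mul_pi_sq_mul_sq_le_cos_two_pi_mul _ (hdirichlet.trans ?_)
    rw [one_div]
    exact inv_anti₀ (by positivity) (by linarith)
  have hpi := pi_sq_mul_inv_sq_lt_pi_div_sub_one (by exact_mod_cast hs : (2 : ℝ) ≤ s)
  have hsqrt := one_le_sqrt_sq_add_one
    (cos (2 * π * (j : ℝ) / n) - cos (2 * π * (j : ℝ) * k / n))
  rw [mul_div_assoc 4]
  linarith

/-- For `n ≥ 4` and `1 ≤ k ≤ n/2`, some index `1 ≤ j ≤ n - 1` in the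
Gera–Stănică formula for the eigenvalues of `P(n,k)` yields an eigenvalue
greater than `3 - 4π / (⌊√n⌋ - 1)`. -/
theorem petersen_eigenvalue_formula_close_to_three (n k : ℕ) (hn : 4 ≤ n)
    (hk1 : 1 ≤ k) (hk2 : 2 * k ≤ n) :
    ∃ j : ℕ, 1 ≤ j ∧ j ≤ n - 1 ∧
      cos (2 * π * (j : ℝ) / (n : ℝ)) + cos (2 * π * (j : ℝ) * (k : ℝ) / (n : ℝ)) +
        Real.sqrt ((cos (2 * π * (j : ℝ) / (n : ℝ)) -
          cos (2 * π * (j : ℝ) * (k : ℝ) / (n : ℝ))) ^ 2 + 1) >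
      3 - 4 * π / ((Nat.sqrt n : ℝ) - 1) :=
  petersen_eigenvalue_formula_close_to_three_general n k hn
end

section
/- For every ε > 0 there exists a constant C = C(ε) > 0 such that for all integers n ≥ 3 and 1 ≤ k ≤ n/2, the number of integers j with 0 ≤ j ≤ n − 1 satisfying cos(2πj/n) + cos(2πjk/n) + √((cos(2πj/n) − cos(2πjk/n))² + 1) ≥ 3 − ε is at least C·n. -/
open Real
open scoped Classical

/-- If `|x| ≤ 1/M` with `M ≥ 2`, then `cos (2π/M) ≤ cos (2πx)`. -/
lemma aux_cos_mono {M : ℕ} (hM : 2 ≤ M) {x : ℝ} (hx : |x| ≤ 1 / M) :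
    Real.cos (2 * π / M) ≤ Real.cos (2 * π * x) := by
  have hM0 : (0:ℝ) < M := by exact_mod_cast (by omega : 0 < M)
  have h1 : Real.cos (2 * π * x) = Real.cos (2 * π * |x|) := by
    rcases abs_cases x with ⟨h, _⟩ | ⟨h, _⟩
    · rw [h]
    · rw [h, mul_neg, Real.cos_neg]
  rw [h1]
  apply Real.cos_le_cos_of_nonneg_of_le_pi
  · positivity
  · have : (2:ℝ) * π / M ≤ 2 * π / 2 := by
      apply div_le_div_of_nonneg_left (by positivity) (by norm_num)
      exact_mod_cast hM
    linarith [this, Real.pi_pos]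
  · calc 2 * π * |x| ≤ 2 * π * (1 / M) := by
          apply mul_le_mul_of_nonneg_left hx (by positivity)
        _ = 2 * π / M := by ring

/-- Two naturals in the same `M`-bucket differ by less than `n/M`. -/
lemma aux_bucket {n M a b : ℕ} (hn : 0 < n) (hab : a ≤ b)
    (h : a * M / n = b * M / n) : b * M - a * M < n := by
  have h1 := Nat.div_add_mod (a * M) n
  have h2 := Nat.div_add_mod (b * M) n
  rw [h] at h1
  have h3 : a * M % n < n := Nat.mod_lt _ hn
  have h4 : b * M % n < n := Nat.mod_lt _ hn
  set q := b * M / n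
  set t := n * q
  omega

lemma aux_abs {n M r r' : ℕ} (hn : 0 < n) (hM : 0 < M) (h : r * M / n = r' * M / n) :
    |(((r:ℝ) - r') / n)| ≤ 1 / M := by
  have hnR : (0:ℝ) < n := by exact_mod_cast hn
  have hMR : (0:ℝ) < M := by exact_mod_cast hM
  have key : |(r:ℝ) - r'| * M ≤ n := by
    rcases le_total r r' with hle | hle
    · have h1 : r' * M - r * M < n := aux_bucket hn hle h
      have h2 : r * M ≤ r' * M := Nat.mul_le_mul_right _ hle
      have h3 : ((r':ℝ)) * M - (r:ℝ) * M ≤ n := by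
        have h4 : ((r' * M - r * M : ℕ) : ℝ) < n := by exact_mod_cast h1
        rw [Nat.cast_sub h2] at h4
        push_cast at h4 ⊢
        linarith
      have h5 : (0:ℝ) ≤ (r':ℝ) - r := sub_nonneg.2 (by exact_mod_cast hle)
      rw [abs_sub_comm, abs_of_nonneg h5]
      nlinarith
    · have h1 : r * M - r' * M < n := aux_bucket hn hle h.symm
      have h2 : r' * M ≤ r * M := Nat.mul_le_mul_right _ hle
      have h3 : ((r:ℝ)) * M - (r':ℝ) * M ≤ n := by
        have h4 : ((r * M - r' * M : ℕ) : ℝ) < n := by exact_mod_cast h1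
        rw [Nat.cast_sub h2] at h4
        push_cast at h4 ⊢
        linarith
      have h5 : (0:ℝ) ≤ (r:ℝ) - r' := sub_nonneg.2 (by exact_mod_cast hle)
      rw [abs_of_nonneg h5]
      nlinarith
  rw [abs_div, abs_of_nonneg hnR.le, div_le_div_iff₀ hnR hMR]
  nlinarith

/-- Periodicity: `cos (2π·(A−B)/n) = cos (2π·(A%n − B%n)/n)`. -/
lemma aux_period {n A B : ℕ} (hn : 0 < n) (hBA : B ≤ A) :
    Real.cos (2 * π * ((A : ℝ) - B) / n) =
      Real.cos (2 * π * ((A % n : ℕ) - (B % n : ℕ) : ℝ) / n) := by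
  have hn' : (n:ℝ) ≠ 0 := by positivity
  set qa := A / n with hqa
  set qb := B / n with hqb
  have h1 := Nat.div_add_mod A n
  have h2 := Nat.div_add_mod B n
  have key : 2 * π * ((A : ℝ) - B) / n =
      2 * π * ((A % n : ℕ) - (B % n : ℕ) : ℝ) / n +
        (((qa : ℤ) - (qb : ℤ) : ℤ) : ℝ) * (2 * π) := by
    have hA : (A : ℝ) = n * qa + (A % n : ℕ) := by exact_mod_cast h1.symm
    have hB : (B : ℝ) = n * qb + (B % n : ℕ) := by exact_mod_cast h2.symm
    rw [hA, hB]
    push_cast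
    field_simp
    ring
  rw [key, Real.cos_add_int_mul_two_pi]

/-- For every `ε > 0` there is `C = C(ε) > 0` such that for all `n ≥ 3` and
`1 ≤ k ≤ n/2`, at least `C·n` of the indices `0 ≤ j ≤ n - 1` in the
Gera–Stănică eigenvalue formula for `P(n,k)` (with the positive square root)
give a value `≥ 3 - ε`. -/
theorem petersen_eigenvalue_formula_positive_proportion (ε : ℝ) (hε : 0 < ε) :
    ∃ C : ℝ, 0 < C ∧ ∀ n k : ℕ, 3 ≤ n → 1 ≤ k → 2 * k ≤ n →
      C * (n : ℝ) ≤
        (((Finset.range n).filter fun j : ℕ =>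
          3 - ε ≤ cos (2 * π * (j : ℝ) / (n : ℝ)) +
            cos (2 * π * (j : ℝ) * (k : ℝ) / (n : ℝ)) +
            Real.sqrt ((cos (2 * π * (j : ℝ) / (n : ℝ)) -
              cos (2 * π * (j : ℝ) * (k : ℝ) / (n : ℝ))) ^ 2 + 1)).card : ℝ) := by
  -- choose M with 2 ≤ M and 3 - ε ≤ 2 cos(2π/M) + 1
  obtain ⟨M, hM2, hMc⟩ : ∃ M : ℕ, 2 ≤ M ∧ 3 - ε ≤ 2 * Real.cos (2 * π / M) + 1 := by
    obtain ⟨M0, hM0⟩ := exists_nat_gt (2 * π / Real.sqrt ε)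
    refine ⟨M0 + 2, by omega, ?_⟩
    have hsε : 0 < Real.sqrt ε := Real.sqrt_pos.2 hε
    have hMpos : (0:ℝ) < ((M0 + 2 : ℕ) : ℝ) := by positivity
    have hM : 2 * π / Real.sqrt ε < ((M0 + 2 : ℕ) : ℝ) := by
      push_cast
      push_cast at hM0
      linarith
    have hle : 2 * π / ((M0 + 2 : ℕ) : ℝ) ≤ Real.sqrt ε := by
      rw [div_le_iff₀ hMpos]
      rw [div_lt_iff₀ hsε] at hM
      nlinarith
    have hcos : 1 - ε / 2 ≤ Real.cos (2 * π / ((M0 + 2 : ℕ) : ℝ)) := by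
      have h1 := Real.one_sub_sq_div_two_le_cos (x := 2 * π / ((M0 + 2 : ℕ) : ℝ))
      have h2 : (2 * π / ((M0 + 2 : ℕ) : ℝ)) ^ 2 ≤ ε := by
        have h3 : (0:ℝ) ≤ 2 * π / ((M0 + 2 : ℕ) : ℝ) := by positivity
        calc (2 * π / ((M0 + 2 : ℕ) : ℝ)) ^ 2 ≤ (Real.sqrt ε) ^ 2 := by nlinarith
          _ = ε := Real.sq_sqrt hε.le
      linarith
    linarith
  have hMR : (0:ℝ) < M := by exact_mod_cast (by omega : 0 < M)
  refine ⟨1 / (2 * (M:ℝ)^2), by positivity, ?_⟩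
  intro n k hn3 hk1 hkn
  have hn0 : 0 < n := by omega
  have hnR : (0:ℝ) < n := by exact_mod_cast hn0
  set F := (Finset.range n).filter (fun j : ℕ =>
      3 - ε ≤ cos (2 * π * (j : ℝ) / (n : ℝ)) +
        cos (2 * π * (j : ℝ) * (k : ℝ) / (n : ℝ)) +
        Real.sqrt ((cos (2 * π * (j : ℝ) / (n : ℝ)) -
          cos (2 * π * (j : ℝ) * (k : ℝ) / (n : ℝ))) ^ 2 + 1)) with hF
  -- every j ∈ range n whose residues are in the same buckets as some smaller one works
  by_cases hbig : 2 * (M * M) ≤ n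
  · -- pigeonhole case
    set g : ℕ → ℕ × ℕ := fun j => (j * M / n, (j * k % n) * M / n) with hg
    have hmaps : ∀ j ∈ Finset.range n, g j ∈ Finset.range M ×ˢ Finset.range M := by
      intro j hj
      rw [Finset.mem_range] at hj
      simp only [hg, Finset.mem_product, Finset.mem_range]
      constructor
      · exact Nat.div_lt_of_lt_mul ((Nat.mul_lt_mul_right (by omega : 0 < M)).2 hj)
      · exact Nat.div_lt_of_lt_mul
          ((Nat.mul_lt_mul_right (by omega : 0 < M)).2 (Nat.mod_lt _ hn0))
    have htne : (Finset.range M ×ˢ Finset.range M).Nonempty :=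
      ⟨(0, 0), by simp [Finset.mem_product]; omega⟩
    have hcard : (Finset.range M ×ˢ Finset.range M).card * (n / (M * M)) ≤
        (Finset.range n).card := by
      simp only [Finset.card_product, Finset.card_range]
      calc M * M * (n / (M * M)) = n / (M * M) * (M * M) := by ring
        _ ≤ n := Nat.div_mul_le_self n (M * M)
    obtain ⟨y, hy, hBcard⟩ :=
      Finset.exists_le_card_fiber_of_mul_le_card_of_maps_to hmaps htne hcard
    set B := (Finset.range n).filter (fun j => g j = y) with hB
    have hb1 : 1 ≤ n / (M * M) := Nat.one_le_div_iff (by nlinarith) |>.2 (by nlinarith)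
    have hBne : B.Nonempty := Finset.card_pos.1 (by omega)
    set j0 := B.min' hBne with hj0def
    have hj0B : j0 ∈ B := B.min'_mem hBne
    set D := B.image (fun j => j - j0) with hD
    have hDcard : D.card = B.card := by
      apply Finset.card_image_of_injOn
      intro a ha b hb hab
      have h1 := B.min'_le a ha
      have h2 := B.min'_le b hb
      simp only at hab
      omega
    have hDsub : D ⊆ F := by
      intro d hd
      obtain ⟨j, hjB, rfl⟩ := Finset.mem_image.1 hd
      have hjB' := Finset.mem_filter.1 hjB
      have hj0B' := Finset.mem_filter.1 hj0B
      have hjn : j < n := Finset.mem_range.1 hjB'.1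
      have hj0j : j0 ≤ j := B.min'_le j hjB
      have hgeq : g j = g j0 := by rw [hjB'.2, hj0B'.2]
      have hfst : j * M / n = j0 * M / n := congrArg Prod.fst hgeq
      have hsnd : (j * k % n) * M / n = (j0 * k % n) * M / n := congrArg Prod.snd hgeq
      rw [hF, Finset.mem_filter, Finset.mem_range]
      refine ⟨by omega, ?_⟩
      -- first cosine
      have hbM : (j - j0) * M < n := by
        have := aux_bucket hn0 (hj0j) hfst.symm
        have hsm : (j - j0) * M = j * M - j0 * M := Nat.sub_mul j j0 M
        omega
      have hx1 : |(((j - j0 : ℕ) : ℝ) / n)| ≤ 1 / M := by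
        rw [abs_div, abs_of_nonneg (Nat.cast_nonneg _), abs_of_nonneg hnR.le,
          div_le_div_iff₀ hnR hMR]
        have : ((j - j0 : ℕ) : ℝ) * M ≤ n := by exact_mod_cast hbM.le
        linarith
      have hc1 : Real.cos (2 * π / M) ≤ Real.cos (2 * π * ((j - j0 : ℕ) : ℝ) / n) := by
        have := aux_cos_mono hM2 hx1
        rwa [← mul_div_assoc] at this
      -- second cosine
      have hBA : j0 * k ≤ j * k := Nat.mul_le_mul_right k hj0j
      have harg : 2 * π * ((j - j0 : ℕ) : ℝ) * (k : ℝ) / n =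
          2 * π * (((j * k : ℕ) : ℝ) - ((j0 * k : ℕ) : ℝ)) / n := by
        rw [Nat.cast_sub hj0j, Nat.cast_mul, Nat.cast_mul]
        ring
      have hper := aux_period (A := j * k) (B := j0 * k) hn0 hBA
      have hx2 : |((((j * k % n : ℕ) : ℝ) - ((j0 * k % n : ℕ) : ℝ)) / n)| ≤ 1 / M :=
        aux_abs hn0 (by omega) hsnd
      have hc2 : Real.cos (2 * π / M) ≤
          Real.cos (2 * π * (((j * k % n : ℕ) : ℝ) - ((j0 * k % n : ℕ) : ℝ)) / n) := by
        have := aux_cos_mono hM2 hx2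
        rwa [← mul_div_assoc] at this
      rw [harg, hper]
      have hsq : (1:ℝ) ≤ Real.sqrt ((Real.cos (2 * π * ((j - j0 : ℕ) : ℝ) / n) -
          Real.cos (2 * π * (((j * k % n : ℕ) : ℝ) - ((j0 * k % n : ℕ) : ℝ)) / n)) ^ 2 + 1) :=
        Real.one_le_sqrt.2 (le_add_of_nonneg_left (sq_nonneg _))
      linarith
    -- counting
    have hcount : n / (M * M) ≤ F.card := by
      calc n / (M * M) ≤ B.card := hBcard
        _ = D.card := hDcard.symm
        _ ≤ F.card := Finset.card_le_card hDsub
    have hnb : n ≤ 2 * (M * M * (n / (M * M))) := by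
      have h1 := Nat.div_add_mod n (M * M)
      have h2 : n % (M * M) < M * M := Nat.mod_lt _ (by nlinarith)
      set b := n / (M * M) with hbdef
      have h3 : M * M * 1 ≤ M * M * b := Nat.mul_le_mul_left _ hb1
      set s := M * M * b with hsdef
      omega
    have hnF : (n : ℝ) ≤ 2 * (M:ℝ)^2 * F.card := by
      have h5 : n ≤ 2 * (M * M * F.card) :=
        hnb.trans (Nat.mul_le_mul_left 2 (Nat.mul_le_mul_left (M * M) hcount))
      calc (n:ℝ) ≤ ((2 * (M * M * F.card) : ℕ) : ℝ) := by exact_mod_cast h5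
        _ = 2 * (M:ℝ)^2 * F.card := by push_cast; ring
    rw [div_mul_eq_mul_div, div_le_iff₀ (by positivity)]
    linarith
  · -- small n case: use j = 0
    have h0F : 0 ∈ F := by
      rw [hF, Finset.mem_filter, Finset.mem_range]
      refine ⟨hn0, ?_⟩
      norm_num
      nlinarith [Real.sqrt_one]
    have hF1 : (1:ℝ) ≤ F.card := by
      have : 0 < F.card := Finset.card_pos.2 ⟨0, h0F⟩
      exact_mod_cast this
    have hns : (n:ℝ) < 2 * (M:ℝ)^2 := by
      have : (n:ℝ) < ((2 * (M * M) : ℕ) : ℝ) := by exact_mod_cast (by omega : n < 2 * (M * M))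
      calc (n:ℝ) < ((2 * (M * M) : ℕ) : ℝ) := this
        _ = 2 * (M:ℝ)^2 := by push_cast; ring
    rw [div_mul_eq_mul_div, div_le_iff₀ (by positivity)]
    nlinarith
end
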